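/- arXiv:0704.0208 — 6 statements merged into one kernel-verified Lean document; each statement's English description precedes it below -/
import Mathlib

section
/- Let a_yyy, a_xyy, a_yyx, a1_xyx, ay_xyx, a_yxy, a1_xxy, ay_xxy, a1_yxx, ay_yxx be nonzero complex numbers with the normalizations a_yyx = a1_xyx = a1_xxy = 1. Suppose the nine one-dimensional pentagon equations hold: a_yyy·a_xyy = a_xyy; a_xyy·a1_xxy·ay_xxy = 1; a_yxy·ay_xyx = a1_xyx; a_yxy·a1_xyx = ay_xyx; a_yyx·a_xyy = (a1_xyx)^2; a_yyx·a_xyy = (ay_xyx)^2; (a_yxy)^2 = 1; ay_yxx·a1_yxx·a_yyx = 1; ay_xxy·ay_yxx = a1_yxx·a1_xxy. Then a_yyy = a_xyy = ay_xxy = 1, a_yxy = ay_xyx with a_yxy ∈ {1, −1}, and a1_yxx = ay_yxx with a1_yxx ∈ {1, −1}. -/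
theorem one_dim_pentagon_solutions_general
    (a_yyy a_xyy a_yyx a1_xyx ay_xyx a_yxy a1_xxy ay_xxy a1_yxx ay_yxx : ℂ)
    (n1 : a_yyx = 1) (n2 : a1_xyx = 1) (n3 : a1_xxy = 1)
    (p1 : a_yyy * a_xyy = a_xyy)
    (p2 : a_xyy * a1_xxy * ay_xxy = 1)
    (p4 : a_yxy * a1_xyx = ay_xyx)
    (p5 : a_yyx * a_xyy = a1_xyx ^ 2)
    (p7 : a_yxy ^ 2 = 1)
    (p8 : ay_yxx * a1_yxx * a_yyx = 1)
    (p9 : ay_xxy * ay_yxx = a1_yxx * a1_xxy) :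
    a_yyy = 1 ∧ a_xyy = 1 ∧ ay_xxy = 1 ∧
      a_yxy = ay_xyx ∧ (a_yxy = 1 ∨ a_yxy = -1) ∧
      a1_yxx = ay_yxx ∧ (a1_yxx = 1 ∨ a1_yxx = -1) := by
  subst n1 n2 n3
  have hxyy : a_xyy = 1 := by linear_combination p5
  subst hxyy
  have hxxy : ay_xxy = 1 := by linear_combination p2
  subst hxxy
  have hyxx : a1_yxx = ay_yxx := by linear_combination -p9
  subst hyxx
  have hyyy : a_yyy = 1 := by linear_combination p1
  have hxyx : a_yxy = ay_xyx := by linear_combination p4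
  have hyxx_sq : a1_yxx ^ 2 = 1 := by linear_combination p8
  exact ⟨hyyy, rfl, rfl, hxyx, sq_eq_one_iff.mp p7, rfl, sq_eq_one_iff.mp hyxx_sq⟩

/-- The nine one-dimensional pentagon equations (with the normalizations
`a_yyx = a1_xyx = a1_xxy = 1`) force the stated values of the remaining
one-dimensional associativity scalars. -/
theorem one_dim_pentagon_solutions
    (a_yyy a_xyy a_yyx a1_xyx ay_xyx a_yxy a1_xxy ay_xxy a1_yxx ay_yxx : ℂ)
    (h1 : a_yyy ≠ 0) (h2 : a_xyy ≠ 0) (h3 : a_yyx ≠ 0) (h4 : a1_xyx ≠ 0)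
    (h5 : ay_xyx ≠ 0) (h6 : a_yxy ≠ 0) (h7 : a1_xxy ≠ 0) (h8 : ay_xxy ≠ 0)
    (h9 : a1_yxx ≠ 0) (h10 : ay_yxx ≠ 0)
    (n1 : a_yyx = 1) (n2 : a1_xyx = 1) (n3 : a1_xxy = 1)
    (p1 : a_yyy * a_xyy = a_xyy)
    (p2 : a_xyy * a1_xxy * ay_xxy = 1)
    (p3 : a_yxy * ay_xyx = a1_xyx)
    (p4 : a_yxy * a1_xyx = ay_xyx)
    (p5 : a_yyx * a_xyy = a1_xyx ^ 2)
    (p6 : a_yyx * a_xyy = ay_xyx ^ 2)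
    (p7 : a_yxy ^ 2 = 1)
    (p8 : ay_yxx * a1_yxx * a_yyx = 1)
    (p9 : ay_xxy * ay_yxx = a1_yxx * a1_xxy) :
    a_yyy = 1 ∧ a_xyy = 1 ∧ ay_xxy = 1 ∧
      a_yxy = ay_xyx ∧ (a_yxy = 1 ∨ a_yxy = -1) ∧
      a1_yxx = ay_yxx ∧ (a1_yxx = 1 ∨ a1_yxx = -1) :=
  one_dim_pentagon_solutions_general a_yyy a_xyy a_yyx a1_xyx ay_xyx a_yxy a1_xxy ay_xxy a1_yxx
    ay_yxx n1 n2 n3 p1 p2 p4 p5 p7 p8 p9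
end

section
/- Let A = [[1,0],[0,−1]] and let F be an invertible 2×2 complex matrix with F² = I₂ and −A·F = F·A. Then F = [[0,f],[f⁻¹,0]] for some nonzero f ∈ ℂ. Likewise, if B is an invertible 2×2 complex matrix with B² = I₂ and −B·A = A·B, then B = [[0,b],[b⁻¹,0]] for some nonzero b ∈ ℂ. Moreover, if additionally −B·F = F·B, then f² + b² = 0. -/
open Matrix

namespace Matrix

variable {K : Type*} [Field K]

theorem diag_eq_zero_of_anticomm_diag_one_neg_one [NeZero (2 : K)] {M : Matrix (Fin 2) (Fin 2) K}
    (h : !![(1 : K), 0; 0, -1] * M + M * !![(1 : K), 0; 0, -1] = 0) :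
    M 0 0 = 0 ∧ M 1 1 = 0 := by
  have h00 := congrFun (congrFun h 0) 0
  have h11 := congrFun (congrFun h 1) 1
  simp only [mul_apply, Fin.sum_univ_two, of_apply, cons_val', cons_val_zero, cons_val_one,
    empty_val', cons_val_fin_one, add_apply, zero_apply] at h00 h11
  constructor
  · simpa [two_ne_zero] using (show (2 : K) * M 0 0 = 0 by linear_combination h00)
  · simpa [two_ne_zero] using (show (2 : K) * M 1 1 = 0 by linear_combination -h11)

theorem exists_eq_antidiag_of_mul_self_eq_one {M : Matrix (Fin 2) (Fin 2) K}
    (h00 : M 0 0 = 0) (h11 : M 1 1 = 0) (hM : M * M = 1) :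
    ∃ m : K, m ≠ 0 ∧ M = !![0, m; m⁻¹, 0] := by
  have hprod : M 0 1 * M 1 0 = 1 := by
    simpa [mul_apply, Fin.sum_univ_two, h00] using congrFun (congrFun hM 0) 0
  refine ⟨M 0 1, left_ne_zero_of_mul_eq_one hprod, ?_⟩
  have hinv : M 1 0 = (M 0 1)⁻¹ := (inv_eq_of_mul_eq_one_right hprod).symm
  ext i j
  fin_cases i <;> fin_cases j <;> simp [h00, h11, hinv]

theorem sq_add_sq_eq_zero_of_antidiag_anticomm {f b : K} (hf : f ≠ 0) (hb : b ≠ 0)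
    (h : -(!![0, b; b⁻¹, 0] * !![0, f; f⁻¹, 0]) = !![0, f; f⁻¹, 0] * !![0, b; b⁻¹, 0]) :
    f ^ 2 + b ^ 2 = 0 := by
  have h00 := congrFun (congrFun h 0) 0
  simp only [mul_apply, Fin.sum_univ_two, of_apply, cons_val', cons_val_zero, cons_val_one,
    empty_val', cons_val_fin_one, neg_apply] at h00
  field_simp at h00
  linear_combination -h00

end Matrix

theorem antidiagonal_form_of_pentagon_general
    (F B : Matrix (Fin 2) (Fin 2) ℂ)
    (hF2 : F * F = 1)
    (hAF : -(!![(1 : ℂ), 0; 0, -1] * F) = F * !![(1 : ℂ), 0; 0, -1])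
    (hB2 : B * B = 1)
    (hBA : -(B * !![(1 : ℂ), 0; 0, -1]) = !![(1 : ℂ), 0; 0, -1] * B) :
    (∃ f : ℂ, f ≠ 0 ∧ F = !![0, f; f⁻¹, 0]) ∧
    (∃ b : ℂ, b ≠ 0 ∧ B = !![0, b; b⁻¹, 0]) ∧
    (-(B * F) = F * B →
      ∀ f b : ℂ, f ≠ 0 → b ≠ 0 → F = !![0, f; f⁻¹, 0] → B = !![0, b; b⁻¹, 0] →
        f ^ 2 + b ^ 2 = 0) := by
  obtain ⟨hF00, hF11⟩ := diag_eq_zero_of_anticomm_diag_one_neg_one (neg_eq_iff_add_eq_zero.mp hAF)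
  obtain ⟨hB00, hB11⟩ :=
    diag_eq_zero_of_anticomm_diag_one_neg_one ((add_comm _ _).trans (neg_eq_iff_add_eq_zero.mp hBA))
  refine ⟨exists_eq_antidiag_of_mul_self_eq_one hF00 hF11 hF2,
    exists_eq_antidiag_of_mul_self_eq_one hB00 hB11 hB2, ?_⟩
  rintro hBF f b hf hb rfl rfl
  exact sq_add_sq_eq_zero_of_antidiag_anticomm hf hb hBF

/-- With `A = diag(1,−1)`, the pentagon relations `F² = I`, `−AF = FA` force `F`
to be an antidiagonal matrix `[[0,f],[f⁻¹,0]]`, similarly for `B`, and the extra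
relation `−BF = FB` forces `f² + b² = 0`. -/
theorem antidiagonal_form_of_pentagon
    (F B : Matrix (Fin 2) (Fin 2) ℂ) (hFu : IsUnit F) (hBu : IsUnit B)
    (hF2 : F * F = 1)
    (hAF : -(!![(1 : ℂ), 0; 0, -1] * F) = F * !![(1 : ℂ), 0; 0, -1])
    (hB2 : B * B = 1)
    (hBA : -(B * !![(1 : ℂ), 0; 0, -1]) = !![(1 : ℂ), 0; 0, -1] * B) :
    (∃ f : ℂ, f ≠ 0 ∧ F = !![0, f; f⁻¹, 0]) ∧
    (∃ b : ℂ, b ≠ 0 ∧ B = !![0, b; b⁻¹, 0]) ∧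
    (-(B * F) = F * B →
      ∀ f b : ℂ, f ≠ 0 → b ≠ 0 → F = !![0, f; f⁻¹, 0] → B = !![0, b; b⁻¹, 0] →
        f ^ 2 + b ^ 2 = 0) :=
  antidiagonal_form_of_pentagon_general F B hF2 hAF hB2 hBA
end

section
/- Let b ∈ ℂ with b² = −1, and set A = [[1,0],[0,−1]], S = [[0,1],[1,0]], F = S, B = [[0,b],[b⁻¹,0]]. Suppose D and E are invertible 2×2 complex matrices satisfying D·F = E, F·D·A = D, and A·D·B = D. Then there is a nonzero d ∈ ℂ such that D = d·[[1,b],[1,−b]] and E = d·[[b,1],[−b,1]]. -/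
/-! Read entrywise, `F D A = D` says the second row of `D` is the first with its second entry
negated, and `A D B = D` gives `D₀₁ = b D₀₀`; so `D` is `D₀₀ • [[1,b],[1,-b]]`, with `D₀₀ ≠ 0`
because `D` is invertible, and `E = D F` follows. -/

open Matrix

section PentagonRelations

variable {R : Type*} [CommRing R] (D : Matrix (Fin 2) (Fin 2) R)

theorem entries_of_swap_mul_mul_diag_eq_self
    (h : !![(0 : R), 1; 1, 0] * D * !![(1 : R), 0; 0, -1] = D) :
    D 1 0 = D 0 0 ∧ D 1 1 = -D 0 1 := by
  have h00 := congrFun (congrFun h 0) 0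
  have h01 := congrFun (congrFun h 0) 1
  simp only [mul_apply, Fin.sum_univ_two, of_apply, cons_val', cons_val_zero, cons_val_one,
    empty_val', cons_val_fin_one] at h00 h01
  constructor
  · linear_combination h00
  · linear_combination -h01

theorem entry_of_diag_mul_mul_antidiag_eq_self (b c : R)
    (h : !![(1 : R), 0; 0, -1] * D * !![0, b; c, 0] = D) :
    D 0 1 = D 0 0 * b := by
  have h01 := congrFun (congrFun h 0) 1
  simp only [mul_apply, Fin.sum_univ_two, of_apply, cons_val', cons_val_zero, cons_val_one,
    empty_val', cons_val_fin_one] at h01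
  linear_combination -h01

theorem eq_smul_of_swap_mul_mul_diag_of_diag_mul_mul_antidiag (b c : R)
    (h₁ : !![(0 : R), 1; 1, 0] * D * !![(1 : R), 0; 0, -1] = D)
    (h₂ : !![(1 : R), 0; 0, -1] * D * !![0, b; c, 0] = D) :
    D = D 0 0 • !![1, b; 1, -b] := by
  obtain ⟨h10, h11⟩ := entries_of_swap_mul_mul_diag_eq_self D h₁
  have h01 := entry_of_diag_mul_mul_antidiag_eq_self D b c h₂
  ext i j
  fin_cases i <;> fin_cases j <;> simp [h10, h11, h01]

end PentagonRelations

theorem DE_form_of_pentagon_general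
    (b : ℂ)
    (D E : Matrix (Fin 2) (Fin 2) ℂ) (hD : IsUnit D)
    (e1 : D * !![(0 : ℂ), 1; 1, 0] = E)
    (e2 : !![(0 : ℂ), 1; 1, 0] * D * !![(1 : ℂ), 0; 0, -1] = D)
    (e3 : !![(1 : ℂ), 0; 0, -1] * D * !![0, b; b⁻¹, 0] = D) :
    ∃ d : ℂ, d ≠ 0 ∧ D = d • !![1, b; 1, -b] ∧ E = d • !![b, 1; -b, 1] := by
  have hD_form := eq_smul_of_swap_mul_mul_diag_of_diag_mul_mul_antidiag D b b⁻¹ e2 e3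
  refine ⟨D 0 0, fun h0 => ?_, hD_form, ?_⟩
  · rw [hD_form, h0, zero_smul] at hD
    exact not_isUnit_zero hD
  · rw [← e1, hD_form, smul_mul, mul_fin_two]
    simp

/-- With `A = diag(1,−1)`, `F = S` and `B = [[0,b],[b⁻¹,0]]` (where `b² = −1`),
the pentagon relations `DF = E`, `FDA = D`, `ADB = D` force
`D = d·[[1,b],[1,−b]]` and `E = d·[[b,1],[−b,1]]` for some nonzero scalar `d`. -/
theorem DE_form_of_pentagon
    (b : ℂ) (hb : b ^ 2 = -1)
    (D E : Matrix (Fin 2) (Fin 2) ℂ) (hD : IsUnit D) (hE : IsUnit E)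
    (e1 : D * !![(0 : ℂ), 1; 1, 0] = E)
    (e2 : !![(0 : ℂ), 1; 1, 0] * D * !![(1 : ℂ), 0; 0, -1] = D)
    (e3 : !![(1 : ℂ), 0; 0, -1] * D * !![0, b; b⁻¹, 0] = D) :
    ∃ d : ℂ, d ≠ 0 ∧ D = d • !![1, b; 1, -b] ∧ E = d • !![b, 1; -b, 1] :=
  DE_form_of_pentagon_general b D E hD e1 e2 e3
end

section
/- With the explicit data below (b = i, φ = (√3−1)/2, d = (1/√2)e^{7πi/12}, etc.), the following fourteen matrix equations hold: F² = I₂; −A·F = F·A; A² = I₂; −B·F = F·B; −B·A = A·B; B² = I₂; E·F = D; D·F = E; F·D·A = D; F·E·A = −E; A·D·B = D; A·E·B = −E; B·E = D; B·D = E. -/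
open Matrix Complex

noncomputable section

def bC : ℂ := Complex.I
def dC : ℂ := (1 / (Real.sqrt 2 : ℂ)) * Complex.exp (7 * Real.pi * Complex.I / 12)

def AM : Matrix (Fin 2) (Fin 2) ℂ := !![1, 0; 0, -1]
def SM : Matrix (Fin 2) (Fin 2) ℂ := !![0, 1; 1, 0]
def FM : Matrix (Fin 2) (Fin 2) ℂ := SM
def BM : Matrix (Fin 2) (Fin 2) ℂ := !![0, bC; bC⁻¹, 0]
def DM : Matrix (Fin 2) (Fin 2) ℂ := dC • !![1, bC; 1, -bC]
def EM : Matrix (Fin 2) (Fin 2) ℂ := dC • !![bC, 1; -bC, 1]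

/-! All fourteen equations are identities between 2 × 2 matrices that hold over any field, for
any scalar `d` and any `b` with `b * b = -1`: the scalar `d` factors out because `D` and `E` are both
`d` times a fixed matrix and every equation is homogeneous of degree one in `(D, E)`, while `b`
enters only through `b⁻¹ = -b`. `F` and `A` are the Pauli matrices `σₓ` and `σ_z`. -/

namespace TwoDimPentagon

section Pauli

variable {R : Type*} [Ring R]

def sigmaX : Matrix (Fin 2) (Fin 2) R := !![0, 1; 1, 0]

def sigmaZ : Matrix (Fin 2) (Fin 2) R := !![1, 0; 0, -1]

theorem sigmaX_mul_self : (sigmaX * sigmaX : Matrix (Fin 2) (Fin 2) R) = 1 := by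
  simp [sigmaX, one_fin_two]

theorem sigmaZ_mul_self : (sigmaZ * sigmaZ : Matrix (Fin 2) (Fin 2) R) = 1 := by
  simp [sigmaZ, one_fin_two]

theorem neg_sigmaZ_mul_sigmaX :
    -(sigmaZ * sigmaX : Matrix (Fin 2) (Fin 2) R) = sigmaX * sigmaZ := by
  simp [sigmaZ, sigmaX]

end Pauli

variable {K : Type*} [Field K] {b : K}

def assocB (b : K) : Matrix (Fin 2) (Fin 2) K := !![0, b; b⁻¹, 0]

def assocD (b d : K) : Matrix (Fin 2) (Fin 2) K := d • !![1, b; 1, -b]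

def assocE (b d : K) : Matrix (Fin 2) (Fin 2) K := d • !![b, 1; -b, 1]

theorem inv_eq_neg_of_mul_self_eq_neg_one (hb : b * b = -1) : b⁻¹ = -b :=
  inv_eq_of_mul_eq_one_right (by rw [mul_neg, hb, neg_neg])

theorem assocB_mul_self (hb : b ≠ 0) : assocB b * assocB b = 1 := by
  simp [assocB, one_fin_two, hb]

theorem neg_assocB_mul_sigmaX (hb : b * b = -1) : -(assocB b * sigmaX) = sigmaX * assocB b := by
  simp [assocB, sigmaX, inv_eq_neg_of_mul_self_eq_neg_one hb]

theorem neg_assocB_mul_sigmaZ : -(assocB b * sigmaZ) = sigmaZ * assocB b := by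
  simp [assocB, sigmaZ]

variable (d : K)

theorem assocE_mul_sigmaX : assocE b d * sigmaX = assocD b d := by
  simp [assocE, assocD, sigmaX]

theorem assocD_mul_sigmaX : assocD b d * sigmaX = assocE b d := by
  simp [assocE, assocD, sigmaX]

theorem sigmaX_mul_assocD_mul_sigmaZ : sigmaX * assocD b d * sigmaZ = assocD b d := by
  simp [assocD, sigmaX, sigmaZ]

theorem sigmaX_mul_assocE_mul_sigmaZ : sigmaX * assocE b d * sigmaZ = -assocE b d := by
  simp [assocE, sigmaX, sigmaZ]

theorem sigmaZ_mul_assocD_mul_assocB (hb : b ≠ 0) :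
    sigmaZ * assocD b d * assocB b = assocD b d := by
  simp [assocD, assocB, sigmaZ, hb]

theorem sigmaZ_mul_assocE_mul_assocB (hb : b * b = -1) :
    sigmaZ * assocE b d * assocB b = -assocE b d := by
  simp [assocE, assocB, sigmaZ, mul_assoc, hb, inv_eq_neg_of_mul_self_eq_neg_one hb]

theorem assocB_mul_assocE (hb : b * b = -1) : assocB b * assocE b d = assocD b d := by
  rw [assocB, assocE, assocD, Matrix.mul_smul]
  congr 1
  simp [hb, inv_eq_neg_of_mul_self_eq_neg_one hb]

theorem assocB_mul_assocD (hb : b * b = -1) : assocB b * assocD b d = assocE b d := by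
  rw [assocB, assocE, assocD, Matrix.mul_smul]
  congr 1
  simp [hb, inv_eq_neg_of_mul_self_eq_neg_one hb]

end TwoDimPentagon

/-- The explicit solution satisfies the fourteen two-dimensional pentagon
equations (with `g = −1`). -/
theorem two_dim_pentagon_hold :
    FM * FM = 1 ∧
    -(AM * FM) = FM * AM ∧
    AM * AM = 1 ∧
    -(BM * FM) = FM * BM ∧
    -(BM * AM) = AM * BM ∧
    BM * BM = 1 ∧
    EM * FM = DM ∧
    DM * FM = EM ∧
    FM * DM * AM = DM ∧
    FM * EM * AM = -EM ∧
    AM * DM * BM = DM ∧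
    AM * EM * BM = -EM ∧
    BM * EM = DM ∧
    BM * DM = EM := by
  have hb : bC * bC = -1 := I_mul_I
  have hb₀ : bC ≠ 0 := I_ne_zero
  open TwoDimPentagon in
  exact ⟨sigmaX_mul_self, neg_sigmaZ_mul_sigmaX, sigmaZ_mul_self, neg_assocB_mul_sigmaX hb,
      neg_assocB_mul_sigmaZ, assocB_mul_self hb₀, assocE_mul_sigmaX dC, assocD_mul_sigmaX dC,
      sigmaX_mul_assocD_mul_sigmaZ dC, sigmaX_mul_assocE_mul_sigmaZ dC,
      sigmaZ_mul_assocD_mul_assocB dC hb₀, sigmaZ_mul_assocE_mul_assocB dC hb,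
      assocB_mul_assocE dC hb, assocB_mul_assocD dC hb⟩
end
end

section
/- Let b be a nonzero complex number and suppose there exist nonzero complex numbers r1, r2 and an invertible 2×2 complex matrix R = [[k,l],[m,n]] satisfying the four equations: r1²·A = r1·B_b·S; r2⁻²·A = r2⁻¹·B_b·S; r2·R·S = S·R·A; r1⁻¹·R⁻¹·S = S·R⁻¹·A, where A = [[1,0],[0,−1]], S = [[0,1],[1,0]], B_b = [[0,b],[b⁻¹,0]]. Then b² = −1, r1 = b, r2 = b⁻¹ = −b, k = n = 0, and m = −b·l (with l ≠ 0). -/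
/-!
Write `S = !![0, 1; 1, 0]` and `A = !![1, 0; 0, -1]`. Since `B_b * S = diag(b, b⁻¹)`, the first two
hexagon equations say `r1 • A = diag(b, b⁻¹) = r2⁻¹ • A`, so `r1 = r2⁻¹ = b` and `b⁻¹ = -b`.
Multiplying the fourth equation by `R` on the left and by `A * R` on the right removes `R⁻¹`:
it becomes `r1 • (R * S) = S * A * R`, while the third reads `r2 • (R * S) = S * R * A`.
Comparing top-row entries gives `r1 * k = -n` and `r2 * k = -n`; as `r2 = -r1` this forces
`k = n = 0`, then `m = r2 * l = -b * l`, and `l ≠ 0` because `R` is invertible.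
-/

open Matrix

theorem eq_and_inv_eq_neg_of_sq_smul_eq {K : Type*} [Field K] {r b : K} (hr : r ≠ 0)
    (h : r ^ 2 • !![(1 : K), 0; 0, -1] = r • (!![0, b; b⁻¹, 0] * !![(0 : K), 1; 1, 0])) :
    r = b ∧ b⁻¹ = -r := by
  simp only [sq, smul_of, smul_cons, smul_eq_mul, mul_one, mul_zero, smul_empty, mul_neg, cons_mul,
    Nat.succ_eq_add_one, Nat.reduceAdd, vecMul_cons, head_cons, zero_smul, tail_cons, empty_vecMul,
    add_zero, zero_add, empty_mul, Equiv.symm_apply_apply, EmbeddingLike.apply_eq_iff_eq,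
    vecCons_inj, mul_eq_mul_left_iff, hr, or_false, and_true, true_and] at h
  exact ⟨h.1, mul_left_cancel₀ hr (by linear_combination -h.2)⟩

theorem smul_mul_eq_mul_mul_of_inv_smul_mul_eq {K n : Type*} [Field K] [Fintype n] [DecidableEq n]
    {R S A : Matrix n n K} (hR : IsUnit R) (hA : A * A = 1) {c : K} (hc : c ≠ 0)
    (h : c⁻¹ • (R⁻¹ * S) = S * R⁻¹ * A) : c • (R * S) = S * A * R := by
  have hdet := (isUnit_iff_isUnit_det R).mp hR
  have : c⁻¹ • (S * A * R) = R * S :=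
    calc c⁻¹ • (S * A * R) = R * (c⁻¹ • (R⁻¹ * S)) * A * R := by
          rw [Matrix.mul_smul, ← Matrix.mul_assoc, mul_nonsing_inv R hdet, Matrix.one_mul,
            Matrix.smul_mul, Matrix.smul_mul]
      _ = R * S * (R⁻¹ * (A * A) * R) := by rw [h]; simp only [Matrix.mul_assoc]
      _ = R * S := by rw [hA, Matrix.mul_one, nonsing_inv_mul R hdet, Matrix.mul_one]
  rw [← this, smul_inv_smul₀ hc]

theorem smul_mul_swap_eq_swap_mul_mul_diag_iff {α : Type*} [CommRing α] (c k l m n : α) :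
    c • (!![k, l; m, n] * !![(0 : α), 1; 1, 0]) =
        !![(0 : α), 1; 1, 0] * !![k, l; m, n] * !![(1 : α), 0; 0, -1] ↔
      c * l = m ∧ c * k = -n ∧ c * n = k ∧ c * m = -l := by
  simp [and_assoc]

theorem smul_mul_swap_eq_swap_mul_diag_mul_iff {α : Type*} [CommRing α] (c k l m n : α) :
    c • (!![k, l; m, n] * !![(0 : α), 1; 1, 0]) =
        !![(0 : α), 1; 1, 0] * !![(1 : α), 0; 0, -1] * !![k, l; m, n] ↔
      c * l = -m ∧ c * k = -n ∧ c * n = k ∧ c * m = l := by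
  simp [and_assoc]

theorem hexagon_constraints_general
    (b : ℂ)
    (r1 r2 : ℂ) (hr1 : r1 ≠ 0) (hr2 : r2 ≠ 0)
    (k l m n : ℂ) (R : Matrix (Fin 2) (Fin 2) ℂ) (hR : R = !![k, l; m, n])
    (hRu : IsUnit R)
    (e1 : r1 ^ 2 • (!![(1 : ℂ), 0; 0, -1]) = r1 • (!![0, b; b⁻¹, 0] * !![(0 : ℂ), 1; 1, 0]))
    (e2 : (r2⁻¹) ^ 2 • (!![(1 : ℂ), 0; 0, -1]) = r2⁻¹ • (!![0, b; b⁻¹, 0] * !![(0 : ℂ), 1; 1, 0]))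
    (e3 : r2 • (R * !![(0 : ℂ), 1; 1, 0]) = !![(0 : ℂ), 1; 1, 0] * R * !![(1 : ℂ), 0; 0, -1])
    (e4 : r1⁻¹ • (R⁻¹ * !![(0 : ℂ), 1; 1, 0]) = !![(0 : ℂ), 1; 1, 0] * R⁻¹ * !![(1 : ℂ), 0; 0, -1]) :
    b ^ 2 = -1 ∧ r1 = b ∧ r2 = b⁻¹ ∧ b⁻¹ = -b ∧ k = 0 ∧ n = 0 ∧ m = -b * l ∧ l ≠ 0 := by
  obtain ⟨rfl, hbinv⟩ := eq_and_inv_eq_neg_of_sq_smul_eq hr1 e1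
  obtain ⟨hr2b, -⟩ := eq_and_inv_eq_neg_of_sq_smul_eq (inv_ne_zero hr2) e2
  obtain rfl : r2 = -r1 := by rw [← inv_inv r2, hr2b, hbinv]
  have e4' := smul_mul_eq_mul_mul_of_inv_smul_mul_eq hRu (by simp [one_fin_two]) hr1 e4
  subst hR
  obtain ⟨hm, hn, -, -⟩ := (smul_mul_swap_eq_swap_mul_mul_diag_iff ..).1 e3
  obtain ⟨-, hn', -, -⟩ := (smul_mul_swap_eq_swap_mul_diag_mul_iff ..).1 e4'
  obtain rfl : k = 0 := by
    have : r1 * k = 0 := by linear_combination (hn' - hn) / 2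
    simpa [hr1] using this
  obtain rfl : n = 0 := by simpa using hn'.symm
  refine ⟨?_, rfl, hbinv.symm, hbinv, rfl, rfl, by rw [← hm, neg_mul], ?_⟩
  · linear_combination -(mul_inv_cancel₀ hr1) + r1 * hbinv
  · rintro rfl
    simp [← hm, isUnit_iff_isUnit_det, det_fin_two_of] at hRu

/-- The four hexagon equations `H^x_{y,x,x}`, `H̄^x_{y,x,x}`, `H^x_{x,y,x}`,
`H̄^x_{x,y,x}` force `b² = −1`, `r1 = b`, `r2 = b⁻¹ = −b`, `k = n = 0` and
`m = −b·l` with `l ≠ 0`. -/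
theorem hexagon_constraints
    (b : ℂ) (hb : b ≠ 0)
    (r1 r2 : ℂ) (hr1 : r1 ≠ 0) (hr2 : r2 ≠ 0)
    (k l m n : ℂ) (R : Matrix (Fin 2) (Fin 2) ℂ) (hR : R = !![k, l; m, n])
    (hRu : IsUnit R)
    (e1 : r1 ^ 2 • (!![(1 : ℂ), 0; 0, -1]) = r1 • (!![0, b; b⁻¹, 0] * !![(0 : ℂ), 1; 1, 0]))
    (e2 : (r2⁻¹) ^ 2 • (!![(1 : ℂ), 0; 0, -1]) = r2⁻¹ • (!![0, b; b⁻¹, 0] * !![(0 : ℂ), 1; 1, 0]))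
    (e3 : r2 • (R * !![(0 : ℂ), 1; 1, 0]) = !![(0 : ℂ), 1; 1, 0] * R * !![(1 : ℂ), 0; 0, -1])
    (e4 : r1⁻¹ • (R⁻¹ * !![(0 : ℂ), 1; 1, 0]) = !![(0 : ℂ), 1; 1, 0] * R⁻¹ * !![(1 : ℂ), 0; 0, -1]) :
    b ^ 2 = -1 ∧ r1 = b ∧ r2 = b⁻¹ ∧ b⁻¹ = -b ∧ k = 0 ∧ n = 0 ∧ m = -b * l ∧ l ≠ 0 :=
  hexagon_constraints_general b r1 r2 hr1 hr2 k l m n R hR hRu e1 e2 e3 e4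
end

section
/- Let b ∈ ℂ with b² = −1 and let d be any nonzero complex number. There do not exist nonzero complex numbers r1, r2, r3 and an invertible 2×2 complex matrix R satisfying all five equations: r1²·A = r1·B_b·S; r2⁻²·A = r2⁻¹·B_b·S; r2·R·S = S·R·A; r1⁻¹·R⁻¹·S = S·R⁻¹·A; d·R·C·R = d²·r3·C², where A = [[1,0],[0,−1]], S = [[0,1],[1,0]], B_b = [[0,b],[b⁻¹,0]], C = [[1,b],[1,−b]]. Consequently the fusion categories with fusion rules x⊗x ≅ 1 ⊕ y ⊕ x ⊕ x, x⊗y ≅ y⊗x ≅ x, y⊗y ≅ 1 admit no braiding. -/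
/-!
The two scalar hexagon equations force `r₁ = b` and `r₂⁻¹ = b`, so `r₂ = r₁⁻¹ = -b`. The two
matrix hexagon equations then say that both `R` and `R⁻¹` have the shape
`!![p, q; -b * q, b * p]`; multiplying two such matrices to the identity forces `p = 0`, so `R`
is antidiagonal. For antidiagonal `R` the first row of `H^1_{x,x,x}` reads
`-d q² = d² r₃ (1 + b)` and `d q² = d² r₃ (1 + b)`, whence `d q² = 0`, contradicting invertibility.
-/

open Matrix

variable {K : Type*} [Field K]

def twistedMatrix (c p q : K) : Matrix (Fin 2) (Fin 2) K :=
  !![p, q; c * q, -(c * p)]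

theorem eq_of_sq_smul_eq_smul_antidiag_mul_swap {b r : K} (hr : r ≠ 0)
    (h : r ^ 2 • !![(1 : K), 0; 0, -1] = r • (!![0, b; b⁻¹, 0] * !![(0 : K), 1; 1, 0])) :
    r = b := by
  have h00 : r ^ 2 = r * b := by simpa using congrFun (congrFun h 0) 0
  exact mul_left_cancel₀ hr (by linear_combination h00)

theorem eq_twistedMatrix_of_smul_mul_swap_eq {c : K} {R : Matrix (Fin 2) (Fin 2) K}
    (h : c • (R * !![(0 : K), 1; 1, 0]) = !![(0 : K), 1; 1, 0] * R * !![(1 : K), 0; 0, -1]) :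
    R = twistedMatrix c (R 0 0) (R 0 1) := by
  have h00 : c * R 0 1 = R 1 0 := by
    simpa [mul_apply, vecMul, dotProduct, Fin.sum_univ_two] using congrFun (congrFun h 0) 0
  have h01 : c * R 0 0 = -R 1 1 := by
    simpa [mul_apply, vecMul, dotProduct, Fin.sum_univ_two] using congrFun (congrFun h 0) 1
  ext i j
  fin_cases i <;> fin_cases j <;> simp [twistedMatrix, ← h00, h01]

section

variable [NeZero (2 : K)]

theorem eq_zero_and_ne_zero_of_twistedMatrix_mul_eq_one {c p q p' q' : K} (hc : c ^ 2 = -1)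
    (h : twistedMatrix c p q * twistedMatrix c p' q' = 1) : p = 0 ∧ q ≠ 0 := by
  have h00 : p * p' + c * q * q' = 1 := by
    simpa [twistedMatrix, mul_apply, mul_assoc, mul_left_comm] using congrFun (congrFun h 0) 0
  have h01 : p * q' - c * q * p' = 0 := by
    simpa [twistedMatrix, mul_apply, mul_assoc, mul_left_comm, sub_eq_add_neg]
      using congrFun (congrFun h 0) 1
  have h11 : c * q * q' + c ^ 2 * p * p' = 1 := by
    simpa [twistedMatrix, mul_apply, mul_assoc, mul_left_comm, sq] using congrFun (congrFun h 1) 1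
  have hpp : p * p' = 0 := by
    have h2pp : 2 * (p * p') = 0 := by linear_combination h00 - h11 + p * p' * hc
    exact (mul_eq_zero.mp h2pp).resolve_left two_ne_zero
  have hqq : c * q * q' = 1 := by linear_combination h00 - hpp
  refine ⟨?_, fun hq ↦ by simp [hq] at hqq⟩
  have hq' : q' ≠ 0 := fun hq' ↦ by simp [hq'] at hqq
  have hpq : p ^ 2 * q' = 0 := by linear_combination p * h01 + c * q * hpp
  simpa [hq'] using hpq

theorem eq_zero_of_smul_twistedMatrix_mul_mul_eq {b d r q : K}
    (hb : b ^ 2 = -1) (hd : d ≠ 0)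
    (h : d • (twistedMatrix (-b) 0 q * !![1, b; 1, -b] * twistedMatrix (-b) 0 q) =
      (d ^ 2 * r) • (!![1, b; 1, -b] * !![1, b; 1, -b])) :
    q = 0 := by
  have h00 : d * q ^ 2 * b ^ 2 = d ^ 2 * r * (1 + b) := by
    simpa [twistedMatrix, sq, mul_assoc, mul_left_comm, mul_comm] using congrFun (congrFun h 0) 0
  have h01 : d * q ^ 2 = d ^ 2 * r * (b - b ^ 2) := by
    simpa [twistedMatrix, sq, mul_assoc, mul_left_comm, mul_comm, sub_eq_add_neg]
      using congrFun (congrFun h 0) 1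
  have hdq : 2 * d * q ^ 2 = 0 := by linear_combination h01 - h00 + (d * q ^ 2 - d ^ 2 * r) * hb
  simpa [hd, two_ne_zero] using hdq

end

/-- The five hexagon equations `H^x_{y,x,x}`, `H̄^x_{y,x,x}`, `H^x_{x,y,x}`,
`H̄^x_{x,y,x}`, `H^1_{x,x,x}` have no simultaneous solution; hence the fusion
categories with fusion rules `x⊗x ≅ 1 ⊕ y ⊕ x ⊕ x`, `x⊗y ≅ y⊗x ≅ x`,
`y⊗y ≅ 1` admit no braiding. -/
theorem no_braiding
    (b : ℂ) (hb : b ^ 2 = -1) (d : ℂ) (hd : d ≠ 0) :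
    ¬ ∃ (r1 r2 r3 : ℂ) (R : Matrix (Fin 2) (Fin 2) ℂ),
        r1 ≠ 0 ∧ r2 ≠ 0 ∧ r3 ≠ 0 ∧ IsUnit R ∧
        r1 ^ 2 • (!![(1 : ℂ), 0; 0, -1]) =
          r1 • (!![0, b; b⁻¹, 0] * !![(0 : ℂ), 1; 1, 0]) ∧
        (r2⁻¹) ^ 2 • (!![(1 : ℂ), 0; 0, -1]) =
          r2⁻¹ • (!![0, b; b⁻¹, 0] * !![(0 : ℂ), 1; 1, 0]) ∧
        r2 • (R * !![(0 : ℂ), 1; 1, 0]) =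
          !![(0 : ℂ), 1; 1, 0] * R * !![(1 : ℂ), 0; 0, -1] ∧
        r1⁻¹ • (R⁻¹ * !![(0 : ℂ), 1; 1, 0]) =
          !![(0 : ℂ), 1; 1, 0] * R⁻¹ * !![(1 : ℂ), 0; 0, -1] ∧
        d • (R * !![1, b; 1, -b] * R) =
          (d ^ 2 * r3) • (!![1, b; 1, -b] * !![1, b; 1, -b]) := by
  rintro ⟨r1, r2, r3, R, hr1, hr2, -, hR, e1, e2, e3, e4, e5⟩
  have hb0 : b ≠ 0 := by rintro rfl; norm_num at hb
  have hbinv : b⁻¹ = -b := by field_simp; linear_combination hb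
  have hr1b : r1 = b := eq_of_sq_smul_eq_smul_antidiag_mul_swap hr1 e1
  obtain rfl : r2 = -b := by
    rw [← inv_inv r2, eq_of_sq_smul_eq_smul_antidiag_mul_swap (inv_ne_zero hr2) e2, hbinv]
  rw [hr1b, hbinv] at e4
  obtain ⟨hp, hq⟩ : R 0 0 = 0 ∧ R 0 1 ≠ 0 :=
    eq_zero_and_ne_zero_of_twistedMatrix_mul_eq_one (p' := R⁻¹ 0 0) (q' := R⁻¹ 0 1)
      (by rw [neg_sq, hb])
      (by rw [← eq_twistedMatrix_of_smul_mul_swap_eq e3, ← eq_twistedMatrix_of_smul_mul_swap_eq e4]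
          exact mul_nonsing_inv R ((isUnit_iff_isUnit_det R).mp hR))
  have hRanti := eq_twistedMatrix_of_smul_mul_swap_eq e3
  rw [hp] at hRanti
  rw [hRanti] at e5
  exact hq (eq_zero_of_smul_twistedMatrix_mul_mul_eq hb hd e5)
end
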